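/- (Global objective factorization, Proposition 1.) Let E be a finite set of agents, T a natural number (the environmental horizon), and Θ a set of parameters. For each parameter θ ∈ Θ and each agent i ∈ E, let tˢ(θ,i) and tᵉ(θ,i) be natural numbers with tˢ(θ,i) ≤ tᵉ(θ,i) ≤ T (the entry and exit steps of agent i), and let r(θ, i, t) ∈ ℝ be the reward of agent i at step t. For t ∈ {0,…,T} let E_t(θ) = { j ∈ E : tˢ(θ,j) ≤ t ≤ tᵉ(θ,j) } be the set of active agents at step t. Define the global objective J^G(θ) = ∑_{t=0}^{T} ∑_{i ∈ E_t(θ)} r(θ, i, t), and for each agent i the individual global objective J^G_i(θ) = ∑_{t = tˢ(θ,i)}^{tᵉ(θ,i)} ( ∑_{j ∈ E_t(θ)} r(θ, j, t) ) / |E_t(θ)|. If θ* ∈ Θ maximizes every individual global objective, i.e. for all i ∈ E and all θ ∈ Θ one has J^G_i(θ) ≤ J^G_i(θ*), then θ* maximizes the global objective, i.e. for all θ ∈ Θ, J^G(θ) ≤ J^G(θ*). -/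
import Mathlib


open Finset

/-- **Global objective factorization (Proposition 1).**
If `θ*` maximizes every agent's individual global objective
`J^G_i(θ) = ∑_{t = tˢ(θ,i)}^{tᵉ(θ,i)} (∑_{j ∈ E_t(θ)} r(θ,j,t)) / |E_t(θ)|`,
then `θ*` maximizes the global objective
`J^G(θ) = ∑_{t=0}^{T} ∑_{i ∈ E_t(θ)} r(θ,i,t)`. -/
theorem global_objective_factorization
    {ι Θ : Type*} (E : Finset ι) (T : ℕ)
    (ts te : Θ → ι → ℕ) (r : Θ → ι → ℕ → ℝ)
    (hle : ∀ (θ : Θ), ∀ i ∈ E, ts θ i ≤ te θ i)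
    (hT : ∀ (θ : Θ), ∀ i ∈ E, te θ i ≤ T)
    (θStar : Θ)
    (hmax : ∀ i ∈ E, ∀ θ : Θ,
      (∑ t ∈ Icc (ts θ i) (te θ i),
          (∑ j ∈ E.filter (fun j => ts θ j ≤ t ∧ t ≤ te θ j), r θ j t) /
            ((E.filter (fun j => ts θ j ≤ t ∧ t ≤ te θ j)).card : ℝ))
        ≤
      (∑ t ∈ Icc (ts θStar i) (te θStar i),
          (∑ j ∈ E.filter (fun j => ts θStar j ≤ t ∧ t ≤ te θStar j), r θStar j t) /
            ((E.filter (fun j => ts θStar j ≤ t ∧ t ≤ te θStar j)).card : ℝ))) :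
    ∀ θ : Θ,
      (∑ t ∈ range (T + 1),
          ∑ i ∈ E.filter (fun j => ts θ j ≤ t ∧ t ≤ te θ j), r θ i t)
        ≤
      (∑ t ∈ range (T + 1),
          ∑ i ∈ E.filter (fun j => ts θStar j ≤ t ∧ t ≤ te θStar j), r θStar i t) := by
  have key : ∀ θ' : Θ,
      (∑ t ∈ range (T + 1),
          ∑ i ∈ E.filter (fun j => ts θ' j ≤ t ∧ t ≤ te θ' j), r θ' i t)
        =
      ∑ i ∈ E, ∑ t ∈ Icc (ts θ' i) (te θ' i),
          (∑ j ∈ E.filter (fun j => ts θ' j ≤ t ∧ t ≤ te θ' j), r θ' j t) /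
            ((E.filter (fun j => ts θ' j ≤ t ∧ t ≤ te θ' j)).card : ℝ) := by
    intro θ'
    have hIcc : ∀ i ∈ E, Icc (ts θ' i) (te θ' i)
        = (range (T + 1)).filter (fun t => ts θ' i ≤ t ∧ t ≤ te θ' i) := by
      intro i hi
      ext t
      simp only [mem_Icc, mem_filter, mem_range, Nat.lt_succ_iff]
      constructor
      · rintro ⟨h1, h2⟩; exact ⟨h2.trans (hT θ' i hi), h1, h2⟩
      · rintro ⟨_, h1, h2⟩; exact ⟨h1, h2⟩
    symm
    calc ∑ i ∈ E, ∑ t ∈ Icc (ts θ' i) (te θ' i),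
          (∑ j ∈ E.filter (fun j => ts θ' j ≤ t ∧ t ≤ te θ' j), r θ' j t) /
            ((E.filter (fun j => ts θ' j ≤ t ∧ t ≤ te θ' j)).card : ℝ)
        = ∑ i ∈ E, ∑ t ∈ range (T + 1),
            if ts θ' i ≤ t ∧ t ≤ te θ' i then
              (∑ j ∈ E.filter (fun j => ts θ' j ≤ t ∧ t ≤ te θ' j), r θ' j t) /
                ((E.filter (fun j => ts θ' j ≤ t ∧ t ≤ te θ' j)).card : ℝ)
            else 0 := by
          refine Finset.sum_congr rfl fun i hi => ?_
          rw [hIcc i hi, Finset.sum_filter]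
      _ = ∑ t ∈ range (T + 1), ∑ i ∈ E,
            if ts θ' i ≤ t ∧ t ≤ te θ' i then
              (∑ j ∈ E.filter (fun j => ts θ' j ≤ t ∧ t ≤ te θ' j), r θ' j t) /
                ((E.filter (fun j => ts θ' j ≤ t ∧ t ≤ te θ' j)).card : ℝ)
            else 0 := Finset.sum_comm
      _ = ∑ t ∈ range (T + 1),
            ∑ i ∈ E.filter (fun j => ts θ' j ≤ t ∧ t ≤ te θ' j), r θ' i t := by
          refine Finset.sum_congr rfl fun t _ => ?_
          rw [← Finset.sum_filter, Finset.sum_const, nsmul_eq_mul]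
          set S := E.filter (fun j => ts θ' j ≤ t ∧ t ≤ te θ' j) with hS
          rcases Nat.eq_zero_or_pos S.card with h | h
          · rw [Finset.card_eq_zero.mp h]
            simp
          · exact mul_div_cancel₀ _ (Nat.cast_ne_zero.mpr h.ne')
  intro θ
  rw [key θ, key θStar]
  exact Finset.sum_le_sum (fun i hi => hmax i hi θ)
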